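/- With the notation above, if x, y ∈ ℝ^N satisfy d(x,y) < ‖x − y‖ (i.e., y is not in the closed Weyl chamber of x, so n(x,y) ≥ 1), then there exists α ∈ R such that ‖x − y‖ > ‖x − σ_α(y)‖. -/

import Mathlib

open scoped RealInnerProductSpace
noncomputable section

/-- `ℝ^N` with the Euclidean structure. -/
abbrev Euc (N : ℕ) := EuclideanSpace ℝ (Fin N)

/-- The reflection `σ_α` in the hyperplane orthogonal to `α`. -/
def sigmaRefl {N : ℕ} (α : Euc N) : Euc N ≃ₗᵢ[ℝ] Euc N :=
  Submodule.reflection (ℝ ∙ α)ᗮ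

/-- The orbit distance `d(x,y) = min_{σ ∈ G} ‖x − σ(y)‖`. -/
def orbDist {N : ℕ} (G : Subgroup (Euc N ≃ₗᵢ[ℝ] Euc N)) (x y : Euc N) : ℝ :=
  ⨅ σ : G, ‖x - (σ : Euc N ≃ₗᵢ[ℝ] Euc N) y‖

/-- The hypotheses defining a normalized root system. -/
structure IsNormalizedRootSystem {N : ℕ} (R : Finset (Euc N)) : Prop where
  ne_zero : (0 : Euc N) ∉ R
  neg_mem : ∀ α ∈ R, -α ∈ R
  smul_mem : ∀ α ∈ R, ∀ c : ℝ, c • α ∈ R → c • α = α ∨ c • α = -α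
  refl_mem : ∀ α ∈ R, ∀ β ∈ R, sigmaRefl α β ∈ R
  norm_eq : ∀ α ∈ R, ‖α‖ = Real.sqrt 2

/-- The Coxeter (reflection) group generated by the reflections `σ_α`, `α ∈ R`. -/
def coxeterGroup {N : ℕ} (R : Finset (Euc N)) : Subgroup (Euc N ≃ₗᵢ[ℝ] Euc N) :=
  Subgroup.closure ((fun α => sigmaRefl α) '' (R : Set (Euc N)))

/-
If no reflection brings `y` closer to `x`, then `⟪α, x⟫ * ⟪α, y⟫ ≥ 0` for every root `α`, so a
regular vector `p` near `y`, tilted towards `x`, defines positive roots `R⁺` for which `x` and `y`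
are both dominant. An element `σ ∈ G` maximizing `⟪x, σ y⟫`, ties broken by `⟪p, σ p⟫`, maps `R⁺`
into `R⁺`: otherwise `σ * σ_α` does better for some `α ∈ R⁺`. By the classical simple-root
argument (`G` is generated by the simple reflections, and a word in them keeping `R⁺` positive can
be shortened by the deletion condition) such a `σ` is the identity. Hence `⟪x, σ y⟫ ≤ ⟪x, y⟫`,
i.e. `‖x - y‖ ≤ ‖x - σ y‖`, for every `σ ∈ G`.
-/

open Filter Topology

section Reflection

variable {N : ℕ}

lemma sigmaRefl_apply {β : Euc N} (hβ : ‖β‖ = Real.sqrt 2) (v : Euc N) :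
    sigmaRefl β v = v - ⟪β, v⟫ • β := by
  have h2 : ‖β‖ ^ 2 = 2 := by rw [hβ, Real.sq_sqrt zero_le_two]
  rw [sigmaRefl, Submodule.reflection_apply, Submodule.starProjection_orthogonal_val,
    Submodule.starProjection_singleton, h2, two_smul]
  push_cast
  module

lemma sigmaRefl_apply_self (β : Euc N) : sigmaRefl β β = -β :=
  Submodule.reflection_mem_subspace_orthogonal_precomplement_eq_neg
    (Submodule.mem_span_singleton_self β)

lemma sigmaRefl_neg (β : Euc N) : sigmaRefl (-β) = sigmaRefl β := by
  simp only [sigmaRefl, ← Set.neg_singleton, Submodule.span_neg]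

lemma sigmaRefl_sigmaRefl (β v : Euc N) : sigmaRefl β (sigmaRefl β v) = v :=
  Submodule.reflection_reflection _ v

lemma sigmaRefl_inv (β : Euc N) : (sigmaRefl β)⁻¹ = sigmaRefl β :=
  Submodule.reflection_inv

lemma sigmaRefl_mul_self (β : Euc N) : sigmaRefl β * sigmaRefl β = 1 :=
  mul_eq_one_iff_eq_inv.2 (sigmaRefl_inv β).symm

lemma sigmaRefl_map (w : Euc N ≃ₗᵢ[ℝ] Euc N) (β : Euc N) :
    sigmaRefl (w β) = w * sigmaRefl β * w⁻¹ := by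
  have h : (ℝ ∙ w β)ᗮ = (ℝ ∙ β)ᗮ.map (w.toLinearEquiv : Euc N →ₗ[ℝ] Euc N) := by
    rw [Submodule.map_orthogonal_equiv, Submodule.map_span, Set.image_singleton]
    rfl
  simp only [sigmaRefl, h, Submodule.reflection_map]
  rfl

lemma norm_sub_sigmaRefl_sq {α : Euc N} (hα : ‖α‖ = Real.sqrt 2) (x y : Euc N) :
    ‖x - sigmaRefl α y‖ ^ 2 = ‖x - y‖ ^ 2 + 2 * (⟪α, x⟫ * ⟪α, y⟫) := by
  have h2 : ‖α‖ ^ 2 = 2 := by rw [hα, Real.sq_sqrt zero_le_two]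
  rw [sigmaRefl_apply hα, sub_sub_eq_add_sub, add_sub_right_comm, norm_add_sq_real, norm_smul,
    mul_pow, h2, Real.norm_eq_abs, sq_abs, inner_smul_right, inner_sub_left,
    real_inner_comm x, real_inner_comm y]
  ring

lemma inner_mul_sigmaRefl_apply {α : Euc N} (hα : ‖α‖ = Real.sqrt 2)
    (w : Euc N ≃ₗᵢ[ℝ] Euc N) (z v : Euc N) :
    ⟪z, (w * sigmaRefl α) v⟫ = ⟪z, w v⟫ - ⟪α, v⟫ * ⟪w α, z⟫ := by
  rw [LinearIsometryEquiv.coe_mul, Function.comp_apply, sigmaRefl_apply hα, map_sub, map_smul,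
    inner_sub_right, inner_smul_right, real_inner_comm z]

lemma sigmaRefl_mem_coxeterGroup {R : Finset (Euc N)} {α : Euc N} (hα : α ∈ R) :
    sigmaRefl α ∈ coxeterGroup R :=
  Subgroup.subset_closure ⟨α, hα, rfl⟩

lemma IsNormalizedRootSystem.apply_mem_iff {R : Finset (Euc N)} (hR : IsNormalizedRootSystem R)
    {w : Euc N ≃ₗᵢ[ℝ] Euc N} (hw : w ∈ coxeterGroup R) (v : Euc N) : w v ∈ R ↔ v ∈ R := by
  induction hw using Subgroup.closure_induction generalizing v with
  | mem _ hs =>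
    obtain ⟨α, hα, rfl⟩ := hs
    exact ⟨fun h => sigmaRefl_sigmaRefl α v ▸ hR.refl_mem α hα _ h, hR.refl_mem α hα v⟩
  | one => rfl
  | mul u w _ _ hu hw => exact (hu (w v)).trans (hw v)
  | inv u _ hu => simpa using (hu (u⁻¹ v)).symm

end Reflection

section RegularVector

variable {E : Type*} [NormedAddCommGroup E] [InnerProductSpace ℝ E]

lemma exists_forall_inner_ne_zero {S : Finset E} (hS : (0 : E) ∉ S) :
    ∃ u : E, ∀ α ∈ S, ⟪α, u⟫ ≠ 0 := by
  classical
  have htop : ⊤ ∉ S.image fun α => (ℝ ∙ α)ᗮ := by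
    simp only [Finset.mem_image, Submodule.orthogonal_eq_top_iff, Submodule.span_singleton_eq_bot,
      not_exists, not_and]
    exact fun α hα h => hS (h ▸ hα)
  obtain ⟨u, hu⟩ :=
    (Set.ne_univ_iff_exists_notMem _).1 (Subspace.biUnion_ne_univ_of_top_notMem htop)
  refine ⟨u, fun α hα h => hu ?_⟩
  simp only [Finset.mem_image, Set.mem_iUnion, SetLike.mem_coe]
  exact ⟨_, ⟨α, hα, rfl⟩, Submodule.mem_orthogonal_singleton_iff_inner_right.2 h⟩

lemma eventually_lex_sign_add_mul (a b : ℝ) :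
    ∀ᶠ t in 𝓝[>] (0 : ℝ), (0 ≤ a + t * b → 0 ≤ a ∧ (a = 0 → 0 ≤ b)) ∧
      (a + t * b = 0 → a = 0 ∧ b = 0) := by
  have hlim : Tendsto (fun t => a + t * b) (𝓝[>] 0) (𝓝 a) := by
    have : Continuous fun t : ℝ => a + t * b := by fun_prop
    simpa using (this.tendsto 0).mono_left nhdsWithin_le_nhds
  rcases lt_trichotomy a 0 with ha | rfl | ha
  · filter_upwards [hlim.eventually_lt_const ha] with t ht
    exact ⟨fun h => absurd h ht.not_ge, fun h => absurd h ht.ne⟩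
  · filter_upwards [self_mem_nhdsWithin] with t (ht : 0 < t)
    simp only [zero_add, le_refl, forall_const, true_and, mul_eq_zero, ht.ne', false_or]
    exact ⟨fun h => nonneg_of_mul_nonneg_right (by linarith) ht, id⟩
  · filter_upwards [hlim.eventually_const_lt ha] with t ht
    exact ⟨fun _ => ⟨ha.le, fun h => absurd h ha.ne'⟩, fun h => absurd h ht.ne'⟩

-- `p = y + t • x + s • u` with `0 < s ≪ t ≪ 1` and `u` off every hyperplane `αᗮ`
lemma exists_regular_of_inner_mul_nonneg {S : Finset E} (hS : (0 : E) ∉ S) (x y : E)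
    (hxy : ∀ α ∈ S, 0 ≤ ⟪α, x⟫ * ⟪α, y⟫) :
    ∃ p : E, ∀ α ∈ S, ⟪α, p⟫ ≠ 0 ∧ (0 < ⟪α, p⟫ → 0 ≤ ⟪α, x⟫ ∧ 0 ≤ ⟪α, y⟫) := by
  obtain ⟨u, hu⟩ := exists_forall_inner_ne_zero hS
  obtain ⟨t, ht⟩ := ((eventually_all_finset S).2 fun α _ =>
    eventually_lex_sign_add_mul ⟪α, y⟫ ⟪α, x⟫).exists
  obtain ⟨s, hs⟩ := ((eventually_all_finset S).2 fun α _ =>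
    eventually_lex_sign_add_mul ⟪α, y + t • x⟫ ⟪α, u⟫).exists
  refine ⟨y + t • x + s • u, fun α hα => ⟨fun h => hu α hα ?_, fun h => ?_⟩⟩
  · rw [inner_add_right, inner_smul_right] at h
    exact ((hs α hα).2 h).2
  · rw [inner_add_right, inner_smul_right] at h
    have hq := ((hs α hα).1 h.le).1
    rw [inner_add_right, inner_smul_right] at hq
    obtain ⟨hy, hx⟩ := (ht α hα).1 hq
    refine ⟨?_, hy⟩
    rcases hy.eq_or_lt with hy0 | hy0
    · exact hx hy0.symm
    · exact nonneg_of_mul_nonneg_left (hxy α hα) hy0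

end RegularVector

section Cone

variable {E : Type*} [AddCommGroup E] [Module ℝ E] [DecidableEq E]

def InCone (T : Finset E) (v : E) : Prop :=
  ∃ f : E → ℝ, (∀ b, 0 ≤ f b) ∧ v = ∑ b ∈ T, f b • b

lemma inCone_of_mem {T : Finset E} {a : E} (ha : a ∈ T) : InCone T a :=
  ⟨Pi.single a 1, fun b => by by_cases h : b = a <;> simp [h],
    by rw [Finset.sum_eq_single_of_mem a ha fun b _ hb => by simp [hb]]; simp⟩

lemma InCone.erase {T : Finset E} {a v : E} (hv : InCone T v) (haT : a ∈ T)
    (ha : InCone (T.erase a) a) : InCone (T.erase a) v := by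
  obtain ⟨f, hf, rfl⟩ := hv
  obtain ⟨g, hg, hga⟩ := ha
  refine ⟨fun b => f b + f a * g b, fun b => add_nonneg (hf b) (mul_nonneg (hf a) (hg b)), ?_⟩
  have hfa : f a • a = ∑ b ∈ T.erase a, (f a * g b) • b := by
    simp_rw [mul_smul, ← Finset.smul_sum, ← hga]
  rw [← Finset.add_sum_erase _ _ haT, hfa, add_comm, ← Finset.sum_add_distrib]
  simp only [add_smul]

-- For `S` the positive roots, `Δ` is the set of simple roots.
structure IsSimpleSystem (S Δ : Finset E) : Prop where
  subset : Δ ⊆ S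
  inCone : ∀ γ ∈ S, InCone Δ γ
  not_inCone_erase : ∀ δ ∈ Δ, ¬ InCone (Δ.erase δ) δ

lemma exists_isSimpleSystem (S : Finset E) : ∃ Δ, IsSimpleSystem S Δ := by
  classical
  obtain ⟨Δ, hΔ, hmin⟩ := (S.powerset.filter fun T => ∀ γ ∈ S, InCone T γ).exists_min_image
    Finset.card ⟨S, Finset.mem_filter.2 ⟨Finset.mem_powerset_self S, fun _ => inCone_of_mem⟩⟩
  simp only [Finset.mem_filter, Finset.mem_powerset] at hΔ hmin
  refine ⟨Δ, hΔ.1, hΔ.2, fun δ hδ hc => ?_⟩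
  exact (Finset.card_erase_lt_of_mem hδ).not_ge <| hmin (Δ.erase δ)
    ⟨(Finset.erase_subset δ Δ).trans hΔ.1, fun γ hγ => (hΔ.2 γ hγ).erase hδ hc⟩

end Cone

section PosRoots

variable {E : Type*} [NormedAddCommGroup E] [InnerProductSpace ℝ E]

def posRoots (R : Finset E) (p : E) : Finset E :=
  R.filter (0 < ⟪·, p⟫)

lemma mem_posRoots {R : Finset E} {p γ : E} : γ ∈ posRoots R p ↔ γ ∈ R ∧ 0 < ⟪γ, p⟫ :=
  Finset.mem_filter

end PosRoots

section PositiveRoots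

variable {N : ℕ} {R : Finset (Euc N)} {p : Euc N} {Δ : Finset (Euc N)}

lemma neg_mem_posRoots (hR : IsNormalizedRootSystem R) (hp : ∀ α ∈ R, ⟪α, p⟫ ≠ 0) {α : Euc N}
    (hα : α ∈ R) (h : α ∉ posRoots R p) : -α ∈ posRoots R p := by
  rw [mem_posRoots, inner_neg_left, Left.neg_pos_iff]
  exact ⟨hR.neg_mem α hα, (not_lt.1 fun h' => h (mem_posRoots.2 ⟨hα, h'⟩)).lt_of_ne (hp α hα)⟩

variable [DecidableEq (Euc N)]

lemma IsSimpleSystem.exists_pos_coeff_of_ne (hR : IsNormalizedRootSystem R)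
    (hΔ : IsSimpleSystem (posRoots R p) Δ) {γ δ : Euc N} (hγ : γ ∈ posRoots R p) (hδ : δ ∈ Δ)
    (hne : γ ≠ δ) {a : Euc N → ℝ} (ha : ∀ b, 0 ≤ a b) (hγa : γ = ∑ β ∈ Δ, a β • β) :
    ∃ β ∈ Δ.erase δ, 0 < a β := by
  by_contra! h
  have hγδ : γ = a δ • δ := by
    rw [hγa, Finset.sum_eq_single_of_mem δ hδ fun β hβ hβδ => by
      rw [le_antisymm (h β (Finset.mem_erase.2 ⟨hβδ, hβ⟩)) (ha β), zero_smul]]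
  obtain ⟨hγR, hγp⟩ := mem_posRoots.1 hγ
  have hδp := (mem_posRoots.1 (hΔ.subset hδ)).2
  rcases hR.smul_mem δ (mem_posRoots.1 (hΔ.subset hδ)).1 (a δ) (hγδ ▸ hγR) with h1 | h1
  · exact hne (hγδ.trans h1)
  · rw [hγδ, h1, inner_neg_left] at hγp
    linarith

lemma IsSimpleSystem.sigmaRefl_mem_posRoots (hR : IsNormalizedRootSystem R)
    (hp : ∀ α ∈ R, ⟪α, p⟫ ≠ 0) (hΔ : IsSimpleSystem (posRoots R p) Δ) {γ δ : Euc N}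
    (hδ : δ ∈ Δ) (hγ : γ ∈ posRoots R p) (hne : γ ≠ δ) : sigmaRefl δ γ ∈ posRoots R p := by
  obtain ⟨hδR, hδp⟩ := mem_posRoots.1 (hΔ.subset hδ)
  by_contra hneg
  obtain ⟨d, hd, hdsum⟩ := hΔ.inCone _
    (neg_mem_posRoots hR hp (hR.refl_mem δ hδR γ (mem_posRoots.1 hγ).1) hneg)
  obtain ⟨a, ha, hasum⟩ := hΔ.inCone γ hγ
  obtain ⟨β₀, hβ₀, haβ₀⟩ := hΔ.exists_pos_coeff_of_ne hR hγ hδ hne ha hasum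
  -- `⟪δ, γ⟫ • δ = γ + (-σ_δ γ)` would put `δ` in the cone of `Δ.erase δ`
  set k := ⟪δ, γ⟫ - (a δ + d δ)
  set S := ∑ β ∈ Δ.erase δ, (a β + d β) • β
  have hkS : k • δ = S := by
    have h : ⟪δ, γ⟫ • δ = ∑ β ∈ Δ, (a β + d β) • β := by
      simp only [add_smul, Finset.sum_add_distrib, ← hasum, ← hdsum,
        sigmaRefl_apply (hR.norm_eq δ hδR)]
      abel
    rw [← Finset.add_sum_erase _ _ hδ] at h
    rw [sub_smul, h]
    abel
  have hSp : 0 < ⟪S, p⟫ := by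
    rw [sum_inner]
    refine Finset.sum_pos' (fun β hβ => ?_) ⟨β₀, hβ₀, ?_⟩
    · have := (mem_posRoots.1 (hΔ.subset (Finset.mem_of_mem_erase hβ))).2
      rw [real_inner_smul_left]
      exact mul_nonneg (add_nonneg (ha β) (hd β)) this.le
    · have := (mem_posRoots.1 (hΔ.subset (Finset.mem_of_mem_erase hβ₀))).2
      rw [real_inner_smul_left]
      exact mul_pos (add_pos_of_pos_of_nonneg haβ₀ (hd β₀)) this
  have hk : 0 < k := by
    rw [← hkS, real_inner_smul_left] at hSp
    exact pos_of_mul_pos_left hSp hδp.le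
  refine hΔ.not_inCone_erase δ hδ ⟨fun β => k⁻¹ * (a β + d β),
    fun β => mul_nonneg (inv_nonneg.2 hk.le) (add_nonneg (ha β) (hd β)), ?_⟩
  simp_rw [mul_smul, ← Finset.smul_sum]
  change δ = k⁻¹ • S
  rw [← hkS, smul_smul, inv_mul_cancel₀ hk.ne', one_smul]

end PositiveRoots

lemma Subgroup.exists_list_of_mem_closure_of_inv_mem {M : Type*} [Group M] {S : Set M}
    (hS : ∀ s ∈ S, s⁻¹ ∈ S) {w : M} (hw : w ∈ Subgroup.closure S) :
    ∃ l : List M, (∀ s ∈ l, s ∈ S) ∧ l.prod = w := by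
  rw [← Subgroup.mem_toSubmonoid, Subgroup.closure_toSubmonoid,
    Set.union_eq_left.2 fun s hs => by simpa using hS _ hs] at hw
  exact Submonoid.exists_list_of_mem_closure hw

section SimpleReflections

variable {N : ℕ} [DecidableEq (Euc N)] {R : Finset (Euc N)} {p : Euc N} {Δ : Finset (Euc N)}

lemma IsSimpleSystem.exists_inner_pos (hR : IsNormalizedRootSystem R)
    (hΔ : IsSimpleSystem (posRoots R p) Δ) {γ : Euc N} (hγ : γ ∈ posRoots R p) :
    ∃ β ∈ Δ, 0 < ⟪β, γ⟫ := by
  obtain ⟨a, ha, hsum⟩ := hΔ.inCone γ hγ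
  by_contra! h
  have hγγ : ⟪γ, γ⟫ ≤ 0 := by
    nth_rw 1 [hsum]
    rw [sum_inner]
    exact Finset.sum_nonpos fun β hβ => by
      rw [real_inner_smul_left]; exact mul_nonpos_of_nonneg_of_nonpos (ha β) (h β hβ)
  exact hR.ne_zero (real_inner_self_nonpos.1 hγγ ▸ (mem_posRoots.1 hγ).1)

lemma IsSimpleSystem.sigmaRefl_mem_coxeterGroup_of_pos (hR : IsNormalizedRootSystem R)
    (hp : ∀ α ∈ R, ⟪α, p⟫ ≠ 0) (hΔ : IsSimpleSystem (posRoots R p) Δ) {γ : Euc N}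
    (hγ : γ ∈ posRoots R p) : sigmaRefl γ ∈ coxeterGroup Δ := by
  classical
  by_contra hγW
  -- a counterexample `γ₀` of least height gives `σ_γ₀ = σ_β σ_γ' σ_β` with `γ' = σ_β γ₀` lower
  obtain ⟨γ₀, hγ₀, hmin⟩ := ((posRoots R p).filter
    (sigmaRefl · ∉ coxeterGroup Δ)).exists_min_image (⟪·, p⟫)
    ⟨γ, Finset.mem_filter.2 ⟨hγ, hγW⟩⟩
  rw [Finset.mem_filter] at hγ₀
  obtain ⟨β, hβ, hβγ₀⟩ := hΔ.exists_inner_pos hR hγ₀.1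
  have hβ_mem : sigmaRefl β ∈ coxeterGroup Δ := sigmaRefl_mem_coxeterGroup hβ
  have hne : γ₀ ≠ β := by rintro rfl; exact hγ₀.2 hβ_mem
  obtain ⟨hβR, hβp⟩ := mem_posRoots.1 (hΔ.subset hβ)
  have hγ' := hΔ.sigmaRefl_mem_posRoots hR hp hβ hγ₀.1 hne
  have hlt : ⟪sigmaRefl β γ₀, p⟫ < ⟪γ₀, p⟫ := by
    rw [sigmaRefl_apply (hR.norm_eq β hβR), inner_sub_left, real_inner_smul_left]
    nlinarith
  have hW : sigmaRefl (sigmaRefl β γ₀) ∈ coxeterGroup Δ := by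
    by_contra h
    exact (hmin _ (Finset.mem_filter.2 ⟨hγ', h⟩)).not_gt hlt
  apply hγ₀.2
  have hconj := sigmaRefl_map (sigmaRefl β) (sigmaRefl β γ₀)
  rw [sigmaRefl_sigmaRefl] at hconj
  rw [hconj]
  exact Subgroup.mul_mem _ (Subgroup.mul_mem _ hβ_mem hW) (Subgroup.inv_mem _ hβ_mem)

lemma IsSimpleSystem.coxeterGroup_le (hR : IsNormalizedRootSystem R)
    (hp : ∀ α ∈ R, ⟪α, p⟫ ≠ 0) (hΔ : IsSimpleSystem (posRoots R p) Δ) :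
    coxeterGroup R ≤ coxeterGroup Δ := by
  refine (Subgroup.closure_le _).2 ?_
  rintro _ ⟨α, hα, rfl⟩
  dsimp only
  by_cases h : α ∈ posRoots R p
  · exact hΔ.sigmaRefl_mem_coxeterGroup_of_pos hR hp h
  · rw [← sigmaRefl_neg]
    exact hΔ.sigmaRefl_mem_coxeterGroup_of_pos hR hp (neg_mem_posRoots hR hp hα h)

lemma IsSimpleSystem.exists_split_of_not_mem_posRoots (hR : IsNormalizedRootSystem R)
    (hp : ∀ α ∈ R, ⟪α, p⟫ ≠ 0) (hΔ : IsSimpleSystem (posRoots R p) Δ)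
    {l : List (Euc N ≃ₗᵢ[ℝ] Euc N)} (hl : ∀ s ∈ l, s ∈ sigmaRefl '' (Δ : Set (Euc N))) {γ : Euc N}
    (hγ : γ ∈ posRoots R p) (h : l.prod γ ∉ posRoots R p) :
    ∃ l₁ l₂ δ, δ ∈ Δ ∧ l = l₁ ++ sigmaRefl δ :: l₂ ∧ l₂.prod γ = δ := by
  induction l with
  | nil => exact absurd hγ (by simpa using h)
  | cons s t ih =>
    obtain ⟨δ, hδ, rfl⟩ := hl s List.mem_cons_self
    by_cases ht : t.prod γ ∈ posRoots R p
    · by_cases hδt : t.prod γ = δ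
      · exact ⟨[], t, δ, hδ, rfl, hδt⟩
      · exact absurd (hΔ.sigmaRefl_mem_posRoots hR hp hδ ht hδt) (by simpa using h)
    · obtain ⟨l₁, l₂, δ', hδ', rfl, h'⟩ := ih (fun s hs => hl s (List.mem_cons_of_mem _ hs)) ht
      exact ⟨sigmaRefl δ :: l₁, l₂, δ', hδ', rfl, h'⟩

lemma IsSimpleSystem.prod_eq_one (hR : IsNormalizedRootSystem R) (hp : ∀ α ∈ R, ⟪α, p⟫ ≠ 0)
    (hΔ : IsSimpleSystem (posRoots R p) Δ) {l : List (Euc N ≃ₗᵢ[ℝ] Euc N)}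
    (hl : ∀ s ∈ l, s ∈ sigmaRefl '' (Δ : Set (Euc N)))
    (hpos : ∀ γ ∈ posRoots R p, l.prod γ ∈ posRoots R p) :
    l.prod = 1 := by
  induction hn : l.length using Nat.strong_induction_on generalizing l with
  | _ n ih =>
  rcases l.eq_nil_or_concat' with rfl | ⟨l', s, rfl⟩
  · rfl
  obtain ⟨δ, hδ, rfl⟩ := hl s (by simp)
  have hl' : ∀ s ∈ l', s ∈ sigmaRefl '' (Δ : Set (Euc N)) := fun s hs => hl s (by simp [hs])
  have hprod : (l' ++ [sigmaRefl δ]).prod = l'.prod * sigmaRefl δ := by simp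
  have hneg : l'.prod δ ∉ posRoots R p := fun h => by
    have := (mem_posRoots.1 (hpos δ (hΔ.subset hδ))).2
    rw [hprod, LinearIsometryEquiv.coe_mul, Function.comp_apply, sigmaRefl_apply_self,
      map_neg, inner_neg_left] at this
    linarith [(mem_posRoots.1 h).2]
  obtain ⟨l₁, l₂, δ', hδ', rfl, hl₂⟩ :=
    hΔ.exists_split_of_not_mem_posRoots hR hp hl' (hΔ.subset hδ) hneg
  -- `σ_{δ'} = w σ_δ w⁻¹` with `w = l₂.prod`, so the letters `σ_{δ'}` and `σ_δ` cancel
  have hshort : (l₁ ++ sigmaRefl δ' :: l₂ ++ [sigmaRefl δ]).prod = (l₁ ++ l₂).prod := by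
    have hconj := sigmaRefl_map l₂.prod δ
    rw [hl₂] at hconj
    rw [List.prod_append, List.prod_append, List.prod_cons, List.prod_singleton, hconj,
      List.prod_append]
    simp only [mul_assoc, inv_mul_cancel_left, sigmaRefl_mul_self, mul_one]
  rw [hshort]
  refine ih _ ?_ (fun s hs => hl s ?_) (hshort ▸ hpos) rfl
  · rw [← hn]; simp
  · simp only [List.mem_append, List.mem_cons] at hs ⊢; tauto

lemma IsSimpleSystem.eq_one_of_forall_mem_posRoots (hR : IsNormalizedRootSystem R)
    (hp : ∀ α ∈ R, ⟪α, p⟫ ≠ 0) (hΔ : IsSimpleSystem (posRoots R p) Δ)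
    {w : Euc N ≃ₗᵢ[ℝ] Euc N} (hw : w ∈ coxeterGroup R)
    (hpos : ∀ γ ∈ posRoots R p, w γ ∈ posRoots R p) : w = 1 := by
  obtain ⟨l, hl, rfl⟩ := Subgroup.exists_list_of_mem_closure_of_inv_mem
    (by rintro _ ⟨δ, hδ, rfl⟩; exact ⟨δ, hδ, (sigmaRefl_inv δ).symm⟩)
    (hΔ.coxeterGroup_le hR hp hw)
  exact hΔ.prod_eq_one hR hp hl hpos

end SimpleReflections

lemma IsNormalizedRootSystem.inner_apply_le {N : ℕ} {R : Finset (Euc N)}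
    (hR : IsNormalizedRootSystem R) (hG : Finite (coxeterGroup R)) {x y : Euc N}
    (hxy : ∀ α ∈ R, 0 ≤ ⟪α, x⟫ * ⟪α, y⟫) {w : Euc N ≃ₗᵢ[ℝ] Euc N} (hw : w ∈ coxeterGroup R) :
    ⟪x, w y⟫ ≤ ⟪x, y⟫ := by
  classical
  obtain ⟨p, hp⟩ := exists_regular_of_inner_mul_nonneg hR.ne_zero x y hxy
  have hp_ne : ∀ α ∈ R, ⟪α, p⟫ ≠ 0 := fun α hα => (hp α hα).1
  obtain ⟨Δ, hΔ⟩ := exists_isSimpleSystem (posRoots R p)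
  -- the tie-breaker `⟪p, σ p⟫` increases under `σ ↦ σ * σ_α` whenever `σ α` is negative
  obtain ⟨σ, hσ⟩ := Finite.exists_max fun σ : coxeterGroup R =>
    toLex (⟪x, (σ : Euc N ≃ₗᵢ[ℝ] Euc N) y⟫, ⟪p, (σ : Euc N ≃ₗᵢ[ℝ] Euc N) p⟫)
  have hσ_pos : ∀ α ∈ posRoots R p, (σ : Euc N ≃ₗᵢ[ℝ] Euc N) α ∈ posRoots R p := by
    intro α hα
    by_contra hneg
    obtain ⟨hαR, hαp⟩ := mem_posRoots.1 hα
    have hσα := (hR.apply_mem_iff σ.2 α).2 hαR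
    have hσαp := (mem_posRoots.1 (neg_mem_posRoots hR hp_ne hσα hneg)).2
    have hσαx := ((hp _ (hR.neg_mem _ hσα)).2 hσαp).1
    have hαy := ((hp α hαR).2 hαp).2
    rw [inner_neg_left] at hσαp hσαx
    refine (hσ ⟨_, Subgroup.mul_mem _ σ.2 (sigmaRefl_mem_coxeterGroup hαR)⟩).not_gt ?_
    simp only [inner_mul_sigmaRefl_apply (hR.norm_eq α hαR), Prod.Lex.toLex_lt_toLex']
    constructor
    · nlinarith
    · intro; nlinarith
  have hσ_one : σ = 1 := Subtype.ext (hΔ.eq_one_of_forall_mem_posRoots hR hp_ne σ.2 hσ_pos)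
  simpa [hσ_one] using Prod.Lex.monotone_fst _ _ (hσ ⟨w, hw⟩)

/-- if `d(x,y) < ‖x - y‖` then some single reflection strictly
decreases the distance. -/
theorem exists_reflection_closer {N : ℕ} (R : Finset (Euc N))
    (hR : IsNormalizedRootSystem R) (hG : Finite (coxeterGroup R)) (x y : Euc N)
    (h : orbDist (coxeterGroup R) x y < ‖x - y‖) :
    ∃ α ∈ R, ‖x - sigmaRefl α y‖ < ‖x - y‖ := by
  by_contra! hcon
  have hxy : ∀ α ∈ R, 0 ≤ ⟪α, x⟫ * ⟪α, y⟫ := fun α hα => by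
    have := norm_sub_sigmaRefl_sq (hR.norm_eq α hα) x y
    nlinarith [hcon α hα, norm_nonneg (x - y)]
  refine h.not_ge (le_ciInf fun w => ?_)
  rw [← sq_le_sq₀ (norm_nonneg _) (norm_nonneg _), norm_sub_sq_real, norm_sub_sq_real,
    LinearIsometryEquiv.norm_map]
  linarith [hR.inner_apply_le hG hxy w.2]
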